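/- In the ring R₁ := 𝒪[[x,y,z]]/((1+y)² − 1), the uniformizer ϖ is a non-zero-divisor (so R₁ is 𝒪-torsion-free), and R₁ has exactly two minimal prime ideals, namely the ideals generated by the images of y and of y + 2. -/

import Mathlib

set_option synthInstance.maxHeartbeats 1000000
set_option maxHeartbeats 4000000

noncomputable section

open MvPowerSeries

variable (L : Type) [Field L] [Algebra ℚ_[2] L] [FiniteDimensional ℚ_[2] L]
  [Algebra ℤ_[2] L] [IsScalarTower ℤ_[2] ℚ_[2] L]

/-- The ring of integers `𝒪` of `L`: the integral closure of `ℤ₂` in `L`. -/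
abbrev RInt := integralClosure ℤ_[2] L

/-- The power series ring `𝒪[[x,y,z]]`, with `x = X 0`, `y = X 1`, `z = X 2`. -/
abbrev PS3 := MvPowerSeries (Fin 3) (RInt L)

/-- The ideal `((1+y)² − 1)` of `𝒪[[x,y,z]]`. -/
def r1Ideal : Ideal (PS3 L) :=
  Ideal.span {((1 : PS3 L) + X 1) ^ 2 - 1}

/-- The ring `R₁ = 𝒪[[x,y,z]]/((1+y)² − 1)`. -/
abbrev R1 := PS3 L ⧸ r1Ideal L

/-- The quotient map `𝒪[[x,y,z]] → R₁`. -/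
def mkR1 : PS3 L →+* R1 L := Ideal.Quotient.mk (r1Ideal L)

attribute [irreducible] r1Ideal mkR1

/-!
Since `(1 + y)² - 1 = y (y + 2)`, everything follows once `y` and `y + 2` are non-associate
primes of `𝒪[[x,y,z]]` dividing no nonzero constant. Write `𝒪[[x,y,z]] = A[[y]]` with
`A = 𝒪[[x,z]]`. As `𝒪` is finite free over `ℤ₂`, `A` is `2`-adically complete, so `y + 2`
is a distinguished polynomial and Weierstrass division gives
`A[[y]] ⧸ (y + 2) ≅ A[y] ⧸ (y + 2) ≅ A`, a domain into which the constants embed.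
-/

section AdicComplete

variable {R M N : Type*} [CommRing R] [AddCommGroup M] [Module R M] [AddCommGroup N] [Module R N]

theorem smodEq_span_singleton_pow_iff {a : R} {n : ℕ} {x y : M} :
    x ≡ y [SMOD Ideal.span {a} ^ n • (⊤ : Submodule R M)] ↔ ∃ z, a ^ n • z = x - y := by
  simp [SModEq.sub_mem, Ideal.span_singleton_pow, Submodule.ideal_span_singleton_smul,
    Submodule.mem_smul_pointwise_iff_exists]

instance Pi.isAdicComplete_span_singleton {ι : Type*} (a : R) [IsAdicComplete (Ideal.span {a}) M] :
    IsAdicComplete (Ideal.span {a}) (ι → M) where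
  haus' x hx := funext fun i => IsHausdorff.haus' (I := Ideal.span {a}) (x i) fun n => by
    obtain ⟨z, hz⟩ := smodEq_span_singleton_pow_iff.mp (hx n)
    exact smodEq_span_singleton_pow_iff.mpr ⟨z i, by simpa using congrFun hz i⟩
  prec' f hf := by
    choose lim hlim using fun i => IsPrecomplete.prec' (I := Ideal.span {a}) (fun n => f n i)
      fun hmn => by
        obtain ⟨z, hz⟩ := smodEq_span_singleton_pow_iff.mp (hf hmn)
        exact smodEq_span_singleton_pow_iff.mpr ⟨z i, by simpa using congrFun hz i⟩
    refine ⟨lim, fun n => smodEq_span_singleton_pow_iff.mpr ?_⟩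
    choose z hz using fun i => smodEq_span_singleton_pow_iff.mp (hlim i n)
    exact ⟨z, funext fun i => by simp [hz]⟩

theorem IsAdicComplete.of_linearEquiv {I : Ideal R} [IsAdicComplete I M] (e : M ≃ₗ[R] N) :
    IsAdicComplete I N := by
  rw [← AdicCompletion.of_bijective_iff]
  have : ⇑(AdicCompletion.of I N) =
      AdicCompletion.congr I e ∘ AdicCompletion.of I M ∘ e.symm := by
    funext x; simp [AdicCompletion.congr_apply, AdicCompletion.map_of]
  rw [this]
  exact (AdicCompletion.congr I e).bijective.comp
    ((AdicCompletion.of_bijective_iff.mpr ‹_›).comp e.symm.bijective)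

end AdicComplete

theorem MvPowerSeries.isAdicComplete_span_algebraMap {S R σ : Type*} [CommRing S] [CommRing R]
    [Algebra S R] [Module.Free S R] [Module.Finite S R] (a : S)
    [IsAdicComplete (Ideal.span {a}) S] :
    IsAdicComplete (Ideal.span {algebraMap S (MvPowerSeries σ R) a}) (MvPowerSeries σ R) := by
  have : IsAdicComplete (Ideal.span {a}) (MvPowerSeries σ R) := IsAdicComplete.of_linearEquiv
    (LinearEquiv.piCongrRight fun _ => (Module.Free.chooseBasis S R).equivFun).symm
  rw [← IsAdicComplete.map_algebraMap_iff (S := MvPowerSeries σ R)] at this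
  simpa [Ideal.map_span] using this

namespace PowerSeries

variable {A : Type*} [CommRing A] {I : Ideal A} {a : A}

theorem isDistinguishedAt_X_sub_C (ha : a ∈ I) :
    (Polynomial.X - Polynomial.C a).IsDistinguishedAt I where
  mem {n} hn := by
    nontriviality A
    rw [Polynomial.natDegree_X_sub_C, Nat.lt_one_iff] at hn
    subst hn
    simpa using I.neg_mem ha
  monic := Polynomial.monic_X_sub_C a

noncomputable def quotientSpanXSubCAlgEquiv [IsAdicComplete I A] (ha : a ∈ I) :
    (A⟦X⟧ ⧸ Ideal.span {X - C a}) ≃ₐ[A] A :=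
  (Ideal.quotientEquivAlgOfEq A (by simp)).trans
    ((isDistinguishedAt_X_sub_C ha).algEquivQuotient.symm.trans
      (Polynomial.quotientSpanXSubCAlgEquiv a))

theorem prime_X_sub_C [IsDomain A] [IsAdicComplete I A] (ha : a ∈ I) :
    Prime (X - C a : A⟦X⟧) := by
  have hne : (X - C a : A⟦X⟧) ≠ 0 := fun h => by
    simpa using congrArg (coeff 1) h
  rw [← Ideal.span_singleton_prime hne, ← Ideal.Quotient.isDomain_iff_prime]
  exact (quotientSpanXSubCAlgEquiv ha).toMulEquiv.isDomain

theorem X_sub_C_dvd_C_iff [IsAdicComplete I A] (ha : a ∈ I) {c : A} :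
    (X - C a : A⟦X⟧) ∣ C c ↔ c = 0 := by
  refine ⟨fun h => ?_, fun h => by simp [h]⟩
  rw [← Ideal.mem_span_singleton, ← Ideal.Quotient.eq_zero_iff_mem] at h
  have hc := congrArg (quotientSpanXSubCAlgEquiv ha) h
  rwa [show C c = algebraMap A A⟦X⟧ c from rfl, Ideal.Quotient.mk_algebraMap, AlgEquiv.commutes,
    map_zero] at hc

end PowerSeries

namespace MvPowerSeries

instance {σ R : Type*} [CommRing R] [IsDomain R] : IsDomain (MvPowerSeries σ R) :=
  NoZeroDivisors.to_isDomain _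

variable (R : Type*) [CommRing R] {n : ℕ}

noncomputable def finSuccEquivAt (i : Fin (n + 1)) :
    MvPowerSeries (Fin (n + 1)) R ≃ₐ[R] PowerSeries (MvPowerSeries (Fin n) R) :=
  (renameEquiv R (Equiv.swap 0 i)).trans (finSuccEquiv R n)

variable {R}

theorem finSuccEquivAt_X_self (i : Fin (n + 1)) : finSuccEquivAt R i (X i) = PowerSeries.X := by
  simp [finSuccEquivAt, renameEquiv, finSuccEquiv_X_zero]

theorem finSuccEquivAt_C (i : Fin (n + 1)) (c : R) :
    finSuccEquivAt R i (C c) = PowerSeries.C (C c) := by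
  simp [finSuccEquivAt, renameEquiv, finSuccEquiv_C]

theorem finSuccEquivAt_X_sub_C (i : Fin (n + 1)) (a : R) :
    finSuccEquivAt R i (X i - C a) = PowerSeries.X - PowerSeries.C (C a) := by
  rw [map_sub, finSuccEquivAt_X_self, finSuccEquivAt_C]

variable {I : Ideal (MvPowerSeries (Fin n) R)} [IsAdicComplete I (MvPowerSeries (Fin n) R)]
  {a : R}

theorem prime_X_sub_C [IsDomain R] (i : Fin (n + 1)) (ha : C a ∈ I) :
    Prime (X i - C a : MvPowerSeries (Fin (n + 1)) R) := by
  rw [← MulEquiv.prime_iff (finSuccEquivAt R i)]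
  simpa [finSuccEquivAt_X_sub_C] using PowerSeries.prime_X_sub_C ha

theorem X_sub_C_dvd_C_iff (i : Fin (n + 1)) (ha : C a ∈ I) {c : R} :
    (X i - C a : MvPowerSeries (Fin (n + 1)) R) ∣ C c ↔ c = 0 := by
  rw [← map_dvd_iff (finSuccEquivAt R i), finSuccEquivAt_X_sub_C, finSuccEquivAt_C,
    PowerSeries.X_sub_C_dvd_C_iff ha, map_eq_zero_iff _ C_injective]

-- `X i = X i - C 0`, and every module is `⊥`-adically complete.
theorem prime_X [IsDomain R] (i : Fin (n + 1)) : Prime (X i : MvPowerSeries (Fin (n + 1)) R) := by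
  simpa using prime_X_sub_C (R := R) (I := ⊥) (a := 0) i (by simp)

theorem X_dvd_C_iff (i : Fin (n + 1)) {c : R} :
    (X i : MvPowerSeries (Fin (n + 1)) R) ∣ C c ↔ c = 0 := by
  simpa using X_sub_C_dvd_C_iff (R := R) (I := ⊥) (a := 0) i (by simp)

end MvPowerSeries

section QuotientByProductOfPrimes

variable {R : Type*} [CommRing R]

theorem Ideal.minimalPrimes_mul_of_isPrime {I J : Ideal R} [hI : I.IsPrime] [hJ : J.IsPrime]
    (hIJ : ¬I ≤ J) (hJI : ¬J ≤ I) : (I * J).minimalPrimes = {I, J} := by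
  ext P
  constructor
  · rintro ⟨⟨hP, hle⟩, hmin⟩
    rcases hP.mul_le.mp hle with h | h
    · exact Or.inl (le_antisymm (hmin ⟨hI, Ideal.mul_le_left⟩ h) h)
    · exact Or.inr (le_antisymm (hmin ⟨hJ, Ideal.mul_le_right⟩ h) h)
  · rintro (rfl | rfl)
    · refine ⟨⟨hI, Ideal.mul_le_left⟩, fun Q ⟨hQ, hle⟩ hQP => ?_⟩
      exact (hQ.mul_le.mp hle).resolve_right fun h => hJI (h.trans hQP)
    · refine ⟨⟨hJ, Ideal.mul_le_right⟩, fun Q ⟨hQ, hle⟩ hQP => ?_⟩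
      exact (hQ.mul_le.mp hle).resolve_left fun h => hIJ (h.trans hQP)

theorem minimalPrimes_quotient (I : Ideal R) :
    minimalPrimes (R ⧸ I) = Ideal.map (Ideal.Quotient.mk I) '' I.minimalPrimes := by
  change (⊥ : Ideal (R ⧸ I)).minimalPrimes = _
  rw [← Ideal.map_quotient_self I,
    Ideal.minimalPrimes_map_of_surjective Ideal.Quotient.mk_surjective, Ideal.mk_ker, sup_idem]

variable {I : Ideal R} {p q : R}

theorem minimalPrimes_quotient_of_eq_span_mul (hI : I = Ideal.span {p * q}) (hp : Prime p)
    (hq : Prime q) (hpq : ¬p ∣ q) (hqp : ¬q ∣ p) :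
    minimalPrimes (R ⧸ I) =
      {Ideal.span {Ideal.Quotient.mk I p}, Ideal.span {Ideal.Quotient.mk I q}} := by
  subst hI
  have := (Ideal.span_singleton_prime hp.ne_zero).mpr hp
  have := (Ideal.span_singleton_prime hq.ne_zero).mpr hq
  rw [minimalPrimes_quotient, ← Ideal.span_singleton_mul_span_singleton,
    Ideal.minimalPrimes_mul_of_isPrime (by rwa [Ideal.span_singleton_le_span_singleton])
      (by rwa [Ideal.span_singleton_le_span_singleton]),
    Set.image_pair, Ideal.map_span, Ideal.map_span, Set.image_singleton, Set.image_singleton]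

theorem span_mk_ne_span_mk_of_eq_span_mul (hI : I = Ideal.span {p * q}) (hpq : ¬p ∣ q) :
    Ideal.span {Ideal.Quotient.mk I p} ≠ Ideal.span {Ideal.Quotient.mk I q} := by
  subst hI
  intro h
  have hle : Ideal.span {p * q} ≤ Ideal.span {p} := by
    rw [Ideal.span_singleton_le_span_singleton]; exact dvd_mul_right p q
  have hle' : Ideal.span {p * q} ≤ Ideal.span {q} := by
    rw [Ideal.span_singleton_le_span_singleton]; exact dvd_mul_left q p
  simp only [← Set.image_singleton, ← Ideal.map_span] at h
  have := congrArg (Ideal.comap (Ideal.Quotient.mk (Ideal.span {p * q}))) h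
  rw [Ideal.comap_map_mk hle, Ideal.comap_map_mk hle'] at this
  exact hpq (Ideal.span_singleton_le_span_singleton.mp this.ge)

theorem mul_dvd_of_dvd_mul_of_not_dvd [IsDomain R] {c f : R} (hp : Prime p) (hq : Prime q)
    (hpc : ¬p ∣ c) (hqc : ¬q ∣ c) (h : p * q ∣ c * f) : p * q ∣ f := by
  obtain ⟨g, rfl⟩ := (hp.dvd_or_dvd (dvd_of_mul_right_dvd h)).resolve_left hpc
  have hcg : q ∣ c * g := by
    rwa [mul_left_comm, mul_dvd_mul_iff_left hp.ne_zero] at h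
  exact mul_dvd_mul_left p ((hq.dvd_or_dvd hcg).resolve_left hqc)

theorem eq_zero_of_mk_mul_eq_zero_of_eq_span_mul [IsDomain R] (hI : I = Ideal.span {p * q})
    {c : R} (hp : Prime p) (hq : Prime q) (hpc : ¬p ∣ c) (hqc : ¬q ∣ c) (s : R ⧸ I)
    (h : Ideal.Quotient.mk I c * s = 0) : s = 0 := by
  subst hI
  obtain ⟨f, rfl⟩ := Ideal.Quotient.mk_surjective s
  rw [← map_mul, Ideal.Quotient.eq_zero_iff_mem, Ideal.mem_span_singleton] at h
  rw [Ideal.Quotient.eq_zero_iff_mem, Ideal.mem_span_singleton]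
  exact mul_dvd_of_dvd_mul_of_not_dvd hp hq hpc hqc h

end QuotientByProductOfPrimes

instance PadicInt.isAdicComplete_span_p (p : ℕ) [Fact p.Prime] :
    IsAdicComplete (Ideal.span {(p : ℤ_[p])}) ℤ_[p] := by
  rw [← PadicInt.maximalIdeal_eq_span_p]
  infer_instance

instance : Module.Finite ℤ_[2] (RInt L) :=
  have := IsIntegralClosure.isNoetherian ℤ_[2] ℚ_[2] L (RInt L)
  Module.Finite.of_restrictScalars_finite ℤ_[2] ℤ_[2] (RInt L)

instance : Module.Free ℤ_[2] (RInt L) :=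
  have : Module.IsTorsionFree ℤ_[2] L := .trans_faithfulSMul ℤ_[2] ℚ_[2] L
  have : Module.IsTorsionFree ℤ_[2] (RInt L) := .of_faithfulSMul (RInt L) ℤ_[2] L
  Module.free_of_finite_type_torsion_free'

instance : IsAdicComplete (Ideal.span {(2 : MvPowerSeries (Fin 2) (RInt L))})
    (MvPowerSeries (Fin 2) (RInt L)) := by
  have : IsAdicComplete (Ideal.span {(2 : ℤ_[2])}) ℤ_[2] := by
    exact_mod_cast PadicInt.isAdicComplete_span_p 2
  simpa only [map_ofNat] using
    MvPowerSeries.isAdicComplete_span_algebraMap (σ := Fin 2) (R := RInt L) (2 : ℤ_[2])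

/-- In `R₁ = 𝒪[[x,y,z]]/((1+y)² − 1)` the uniformizer `ϖ` is a
non-zero-divisor (so `R₁` is `𝒪`-torsion-free), and `R₁` has exactly two
minimal primes, generated by the images of `y` and of `y + 2` respectively. -/
theorem stmt_18 (ϖ : RInt L) (hϖ : Irreducible ϖ) :
    (∀ s : R1 L, mkR1 L (C (σ := Fin 3) (R := RInt L) ϖ) * s = 0 → s = 0) ∧
    minimalPrimes (R1 L) =
      {Ideal.span {mkR1 L (X 1)}, Ideal.span {mkR1 L (X 1) + 2}} ∧
    Ideal.span {mkR1 L (X 1)} ≠ Ideal.span {mkR1 L (X 1) + 2} := by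
  have h2 : (2 : RInt L) ≠ 0 := by
    have : CharZero L := charZero_of_injective_algebraMap (algebraMap ℚ_[2] L).injective
    exact two_ne_zero
  have hC : (C (-2) : PS3 L) = -2 := by rw [map_neg, map_ofNat]
  have hmem : C (-2) ∈ Ideal.span {(2 : MvPowerSeries (Fin 2) (RInt L))} := by
    rw [map_neg, map_ofNat]
    exact neg_mem (Ideal.mem_span_singleton_self _)
  have hp : Prime (X 1 : PS3 L) := prime_X 1
  have hq : Prime (X 1 - C (-2) : PS3 L) := prime_X_sub_C 1 hmem
  have hpq : ¬(X 1 : PS3 L) ∣ X 1 - C (-2) := fun h =>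
    h2 ((X_dvd_C_iff 1).mp (by simpa using dvd_sub_self_left.mp h))
  have hqp : ¬(X 1 - C (-2) : PS3 L) ∣ X 1 := fun h =>
    h2 ((X_sub_C_dvd_C_iff 1 hmem).mp (by simpa using dvd_sub h (dvd_refl _)))
  have hI : r1Ideal L = Ideal.span {X 1 * (X 1 - C (-2))} := by
    unfold r1Ideal
    rw [hC]
    ring_nf
  have hmk : mkR1 L = Ideal.Quotient.mk (r1Ideal L) := by unfold mkR1; rfl
  rw [show mkR1 L (X 1) + 2 = mkR1 L (X 1 - C (-2)) by rw [hC, sub_neg_eq_add, map_add, map_ofNat],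
    hmk]
  exact ⟨eq_zero_of_mk_mul_eq_zero_of_eq_span_mul hI hp hq
      (fun h => hϖ.ne_zero ((X_dvd_C_iff 1).mp h))
      (fun h => hϖ.ne_zero ((X_sub_C_dvd_C_iff 1 hmem).mp h)),
    minimalPrimes_quotient_of_eq_span_mul hI hp hq hpq hqp,
    span_mk_ne_span_mk_of_eq_span_mul hI hpq⟩
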